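/- Fix t ∈ ℝ and r > 0. On the open set Ω = { v = (v₁,v₂) ∈ ℝ² : v₁ < 0, v₂ ≠ 0, v₁² + v₂² > v₂²·r² }, define t_{1,0}(v) := t − ( v₁·r + 2·√(v₁² + v₂² − v₂²·r²) )/(v₁² + v₂²). Then t_{1,0} is differentiable on Ω and for all v ∈ Ω: sgn(v₂)·|v₂|·(∂t_{1,0}/∂v₂)(v) − |v₁|·(∂t_{1,0}/∂v₁)(v) = t − t_{1,0}(v). -/

import Mathlib

/-- The turning time `t_{1,0}` of the backward free-transport characteristic through
radius `r` at time `t` with velocity `v` (after one specular reflection). -/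
noncomputable def turningTime (t r : ℝ) (v : ℝ × ℝ) : ℝ :=
  t - (v.1 * r + 2 * Real.sqrt (v.1 ^ 2 + v.2 ^ 2 - v.2 ^ 2 * r ^ 2)) /
    (v.1 ^ 2 + v.2 ^ 2)

/-!
With `sgn(v₂)|v₂| = v₂` and `|v₁| = -v₁`, the left-hand side is the derivative of `t_{1,0}`
along the Euler field `v ↦ v`. Since `t - t_{1,0}` is positively homogeneous of degree `-1`
in `v` (the numerator scales like `|v|`, the denominator like `|v|²`), Euler's identity gives
`D(t - t_{1,0})(v) v = -(t - t_{1,0}(v))`, which is the claim.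
-/

open Filter Topology

theorem Real.sign_mul_abs (x : ℝ) : Real.sign x * |x| = x := by
  rcases lt_trichotomy x 0 with h | rfl | h
  · rw [Real.sign_of_neg h, abs_of_neg h]; ring
  · simp
  · rw [Real.sign_of_pos h, abs_of_pos h]; ring

theorem ContinuousLinearMap.apply_eq_fst_mul_add_snd_mul (L : ℝ × ℝ →L[ℝ] ℝ) (v : ℝ × ℝ) :
    L v = v.1 * L (1, 0) + v.2 * L (0, 1) := by
  conv_lhs => rw [show v = v.1 • ((1 : ℝ), (0 : ℝ)) + v.2 • ((0 : ℝ), (1 : ℝ)) by ext <;> simp]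
  simp only [map_add, map_smul, smul_eq_mul]

theorem fderiv_apply_self_of_homogeneous {E : Type*} [NormedAddCommGroup E] [NormedSpace ℝ E]
    {f : E → ℝ} {v : E} {n : ℤ} (hf : DifferentiableAt ℝ f v)
    (hhom : ∀ c : ℝ, 0 < c → f (c • v) = c ^ n * f v) :
    fderiv ℝ f v v = n * f v := by
  have hray : HasDerivAt (fun c : ℝ => f (c • v)) (fderiv ℝ f v v) 1 := by
    have hline : HasDerivAt (fun c : ℝ => c • v) v 1 := by
      simpa using (hasDerivAt_id (1 : ℝ)).smul_const v
    exact hf.hasFDerivAt.comp_hasDerivAt_of_eq 1 hline (one_smul ℝ v).symm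
  have hpow : HasDerivAt (fun c : ℝ => c ^ n * f v) (n * f v) 1 := by
    simpa using (hasDerivAt_zpow n 1 (Or.inl one_ne_zero)).mul_const (f v)
  have heq : (fun c : ℝ => f (c • v)) =ᶠ[𝓝 1] fun c => c ^ n * f v :=
    eventually_of_mem (Ioi_mem_nhds one_pos) hhom
  exact hray.unique (hpow.congr_of_eventuallyEq heq)

noncomputable def turningDelay (r : ℝ) (v : ℝ × ℝ) : ℝ :=
  (v.1 * r + 2 * Real.sqrt (v.1 ^ 2 + v.2 ^ 2 - v.2 ^ 2 * r ^ 2)) / (v.1 ^ 2 + v.2 ^ 2)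

theorem turningTime_eq_sub_turningDelay (t r : ℝ) :
    turningTime t r = fun v => t - turningDelay r v :=
  rfl

theorem turningDelay_smul (r : ℝ) (v : ℝ × ℝ) {c : ℝ} (hc : 0 < c) :
    turningDelay r (c • v) = c⁻¹ * turningDelay r v := by
  have hsqrt : Real.sqrt ((c * v.1) ^ 2 + (c * v.2) ^ 2 - (c * v.2) ^ 2 * r ^ 2) =
      c * Real.sqrt (v.1 ^ 2 + v.2 ^ 2 - v.2 ^ 2 * r ^ 2) := by
    rw [← Real.sqrt_sq hc.le, ← Real.sqrt_mul (sq_nonneg c), Real.sqrt_sq hc.le]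
    ring_nf
  simp only [turningDelay, Prod.smul_fst, Prod.smul_snd, smul_eq_mul, hsqrt]
  rw [show (c * v.1) ^ 2 + (c * v.2) ^ 2 = c * (c * (v.1 ^ 2 + v.2 ^ 2)) by ring,
    show c * v.1 * r + 2 * (c * _) = c * (v.1 * r + 2 * Real.sqrt _) by ring,
    mul_div_mul_left _ _ hc.ne', div_mul_eq_div_div_swap, div_eq_inv_mul]

theorem differentiableAt_turningDelay {r : ℝ} {v : ℝ × ℝ}
    (hQ : v.1 ^ 2 + v.2 ^ 2 - v.2 ^ 2 * r ^ 2 ≠ 0) (hN : v.1 ^ 2 + v.2 ^ 2 ≠ 0) :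
    DifferentiableAt ℝ (turningDelay r) v := by
  unfold turningDelay
  fun_prop (disch := assumption)

theorem fderiv_turningTime_apply_self {t r : ℝ} {v : ℝ × ℝ}
    (hd : DifferentiableAt ℝ (turningDelay r) v) :
    fderiv ℝ (turningTime t r) v v = t - turningTime t r v := by
  have heuler := fderiv_apply_self_of_homogeneous (n := -1) hd fun c hc => by
    rw [turningDelay_smul r v hc, zpow_neg_one]
  rw [turningTime_eq_sub_turningDelay, fderiv_const_sub, neg_apply, heuler]
  push_cast
  ring

theorem turningTime_derivative_identity_general (t r : ℝ) :
    ∀ v ∈ {w : ℝ × ℝ | w.1 < 0 ∧ w.2 ≠ 0 ∧ w.2 ^ 2 * r ^ 2 < w.1 ^ 2 + w.2 ^ 2},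
      DifferentiableAt ℝ (turningTime t r) v ∧
      Real.sign v.2 * |v.2| * fderiv ℝ (turningTime t r) v ((0 : ℝ), (1 : ℝ)) -
          |v.1| * fderiv ℝ (turningTime t r) v ((1 : ℝ), (0 : ℝ)) =
        t - turningTime t r v := by
  rintro v ⟨hv₁, -, hΩ⟩
  have hd : DifferentiableAt ℝ (turningDelay r) v :=
    differentiableAt_turningDelay (by linarith) (by nlinarith)
  refine ⟨(turningTime_eq_sub_turningDelay t r).symm ▸ hd.const_sub t, ?_⟩
  rw [Real.sign_mul_abs, abs_of_neg hv₁, ← fderiv_turningTime_apply_self hd,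
    ContinuousLinearMap.apply_eq_fst_mul_add_snd_mul _ v]
  ring

/-- The partial-derivative identity (6-10):
`sgn(v₂)·|v₂|·∂t_{1,0}/∂v₂ − |v₁|·∂t_{1,0}/∂v₁ = t − t_{1,0}(v)` on the open set Ω. -/
theorem turningTime_derivative_identity (t r : ℝ) (hr : 0 < r) :
    ∀ v ∈ {w : ℝ × ℝ | w.1 < 0 ∧ w.2 ≠ 0 ∧ w.2 ^ 2 * r ^ 2 < w.1 ^ 2 + w.2 ^ 2},
      DifferentiableAt ℝ (turningTime t r) v ∧
      Real.sign v.2 * |v.2| * fderiv ℝ (turningTime t r) v ((0 : ℝ), (1 : ℝ)) -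
          |v.1| * fderiv ℝ (turningTime t r) v ((1 : ℝ), (0 : ℝ)) =
        t - turningTime t r v :=
  turningTime_derivative_identity_general t r
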